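/- In a 2-agent 2×2 general-sum game with u_r u_c > 0 in which both center coordinates α^c = −b_c/u_c and β^c = −b_r/u_r lie in the valid probability range [0,1], if both agents follow GA-SPP with γ₀ and η satisfying Conditions 1–3, then from any initial strategy pair the sequence (α_k,β_k) converges to a Nash equilibrium. -/
import Mathlib


/- Framework for 2-agent 2×2 general-sum games with scalar strategies
   α, β ∈ [0,1] (the probability of the first action). -/

open Filter Topology

noncomputable section

/-- Projection of a real number onto [0, 1] (clamping). -/
def clamp (x : ℝ) : ℝ := max 0 (min 1 x)

/-- Row player's expected payoff. -/
def Vr2 (R : Matrix (Fin 2) (Fin 2) ℝ) (α β : ℝ) : ℝ :=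
  R 0 0 * (α * β) + R 0 1 * (α * (1 - β)) +
  R 1 0 * ((1 - α) * β) + R 1 1 * ((1 - α) * (1 - β))

/-- Column player's expected payoff. -/
def Vc2 (C : Matrix (Fin 2) (Fin 2) ℝ) (α β : ℝ) : ℝ :=
  C 0 0 * (α * β) + C 0 1 * (α * (1 - β)) +
  C 1 0 * ((1 - α) * β) + C 1 1 * ((1 - α) * (1 - β))

def ur2 (R : Matrix (Fin 2) (Fin 2) ℝ) : ℝ := R 0 0 + R 1 1 - R 0 1 - R 1 0
def br2 (R : Matrix (Fin 2) (Fin 2) ℝ) : ℝ := R 0 1 - R 1 1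
def uc2 (C : Matrix (Fin 2) (Fin 2) ℝ) : ℝ := C 0 0 + C 1 1 - C 0 1 - C 1 0
def bc2 (C : Matrix (Fin 2) (Fin 2) ℝ) : ℝ := C 1 0 - C 1 1

/-- ∂_α V_r(α, β) = u_r β + b_r. -/
def dVr2 (R : Matrix (Fin 2) (Fin 2) ℝ) (β : ℝ) : ℝ := ur2 R * β + br2 R

/-- ∂_β V_c(α, β) = u_c α + b_c. -/
def dVc2 (C : Matrix (Fin 2) (Fin 2) ℝ) (α : ℝ) : ℝ := uc2 C * α + bc2 C

/-- (α, β) is a Nash equilibrium of the 2×2 game. -/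
def IsNash2 (R C : Matrix (Fin 2) (Fin 2) ℝ) (α β : ℝ) : Prop :=
  α ∈ Set.Icc (0 : ℝ) 1 ∧ β ∈ Set.Icc (0 : ℝ) 1 ∧
  (∀ α' ∈ Set.Icc (0 : ℝ) 1, Vr2 R α' β ≤ Vr2 R α β) ∧
  (∀ β' ∈ Set.Icc (0 : ℝ) 1, Vc2 C α β' ≤ Vc2 C α β)

/-- δ = max entry − min entry of a 2×2 payoff matrix. -/
def spread2 (M : Matrix (Fin 2) (Fin 2) ℝ) : ℝ :=
  (Finset.univ.sup' Finset.univ_nonempty fun p : Fin 2 × Fin 2 => M p.1 p.2)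
  - (Finset.univ.inf' Finset.univ_nonempty fun p : Fin 2 × Fin 2 => M p.1 p.2)

/-- Conditions 1–3 on the initial prediction length γ₀ and the step size η. -/
def Conds2 (R C : Matrix (Fin 2) (Fin 2) ℝ) (γ₀ η : ℝ) : Prop :=
  0 < γ₀ ∧ 0 < η ∧
  4 * γ₀ ^ 2 * spread2 R * spread2 C < 1 ∧
  η < 1 / (spread2 R + spread2 C) ∧ γ₀ < 1 / (spread2 R + spread2 C)

/-- Both agents follow GA-SPP in the 2×2 game: `a`,`b` are the strategies,
`abar`,`bbar` the predictions, `γ` the prediction lengths, `η` the step size. -/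
def GASPP2Run (R C : Matrix (Fin 2) (Fin 2) ℝ) (η : ℝ)
    (γ a b abar bbar : ℕ → ℝ) : Prop :=
  ∀ k : ℕ,
    abar (k + 1) = clamp (a k + γ k * dVr2 R (b k)) ∧
    bbar (k + 1) = clamp (b k + γ k * dVc2 C (a k)) ∧
    ((abar (k + 1) = a k ∧ bbar (k + 1) = b k) →
        a (k + 1) = a k ∧ b (k + 1) = b k ∧ γ (k + 1) = γ k) ∧
    (¬(abar (k + 1) = a k ∧ bbar (k + 1) = b k) →
        a (k + 1) = clamp (a k + η * dVr2 R (bbar (k + 1))) ∧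
        b (k + 1) = clamp (b k + η * dVc2 C (abar (k + 1))) ∧
        ((a (k + 1) = a k ∧ b (k + 1) = b k) →
            ∃ μ : ℝ, 0 < μ ∧ μ < 1 ∧ γ (k + 1) = μ * γ k) ∧
        (¬(a (k + 1) = a k ∧ b (k + 1) = b k) → γ (k + 1) = γ k))

/-- The row agent follows GA-SPP while the column agent follows basic
gradient ascent (GA), based on the opponent's current strategy. -/
def GASPP2vsGARun (R C : Matrix (Fin 2) (Fin 2) ℝ) (η : ℝ)
    (γ a b abar bbar : ℕ → ℝ) : Prop :=
  ∀ k : ℕ,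
    abar (k + 1) = clamp (a k + γ k * dVr2 R (b k)) ∧
    bbar (k + 1) = clamp (b k + γ k * dVc2 C (a k)) ∧
    ((abar (k + 1) = a k ∧ bbar (k + 1) = b k) →
        a (k + 1) = a k ∧ b (k + 1) = b k ∧ γ (k + 1) = γ k) ∧
    (¬(abar (k + 1) = a k ∧ bbar (k + 1) = b k) →
        a (k + 1) = clamp (a k + η * dVr2 R (bbar (k + 1))) ∧
        b (k + 1) = clamp (b k + η * dVc2 C (a k)) ∧
        ((a (k + 1) = a k ∧ b (k + 1) = b k) →
            ∃ μ : ℝ, 0 < μ ∧ μ < 1 ∧ γ (k + 1) = μ * γ k) ∧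
        (¬(a (k + 1) = a k ∧ b (k + 1) = b k) → γ (k + 1) = γ k))

end

lemma clamp_mem (x : ℝ) : clamp x ∈ Set.Icc (0:ℝ) 1 := by
  constructor
  · exact le_max_left _ _
  · simp only [clamp, max_le_iff]
    exact ⟨zero_le_one, min_le_left _ _⟩

lemma clamp_of_mem {x : ℝ} (h : x ∈ Set.Icc (0:ℝ) 1) : clamp x = x := by
  simp only [clamp]
  rw [min_eq_right h.2, max_eq_right h.1]

lemma clamp_mono : Monotone clamp := by
  intro x y h
  exact max_le_max le_rfl (min_le_min le_rfl h)

lemma clamp_le_of_nonneg {x : ℝ} (h : 0 ≤ x) : clamp x ≤ x := by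
  simp only [clamp, max_le_iff]
  exact ⟨h, min_le_right _ _⟩

lemma le_clamp_of_le_one {x : ℝ} (h : x ≤ 1) : x ≤ clamp x := by
  simp only [clamp]
  exact le_max_of_le_right (le_min h le_rfl)

lemma clamp_of_nonpos {x : ℝ} (h : x ≤ 0) : clamp x = 0 := by
  simp only [clamp]
  rw [min_eq_right (h.trans zero_le_one), max_eq_left h]

lemma clamp_of_one_le {x : ℝ} (h : 1 ≤ x) : clamp x = 1 := by
  simp only [clamp]
  rw [min_eq_left h, max_eq_right zero_le_one]

lemma min_le_clamp (x : ℝ) : min 1 x ≤ clamp x := le_max_right _ _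

lemma pos_of_clamp_pos {x : ℝ} (h : 0 < clamp x) : 0 < x := by
  by_contra hc
  push_neg at hc
  rw [clamp_of_nonpos hc] at h
  exact lt_irrefl _ h

lemma lt_one_of_clamp_lt_one {x : ℝ} (h : clamp x < 1) : x < 1 := by
  by_contra hc
  push_neg at hc
  rw [clamp_of_one_le hc] at h
  exact lt_irrefl _ h

lemma clamp_fix {x g d : ℝ} (hx : x ∈ Set.Icc (0:ℝ) 1) (hg : 0 < g)
    (h : clamp (x + g * d) = x) : (d ≤ 0 ∨ x = 1) ∧ (0 ≤ d ∨ x = 0) := by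
  constructor
  · by_contra hc
    push_neg at hc
    obtain ⟨hd, hx1⟩ := hc
    have hd' : 0 < d := hd
    have hlt : x < 1 := lt_of_le_of_ne hx.2 hx1
    have ht : x < x + g * d := by nlinarith
    have : min 1 (x + g * d) ≤ clamp (x + g * d) := min_le_clamp _
    rw [h] at this
    rcases min_le_iff.mp this with h' | h' <;> linarith
  · by_contra hc
    push_neg at hc
    obtain ⟨hd, hx0⟩ := hc
    have hd' : d < 0 := hd
    have hlt : 0 < x := lt_of_le_of_ne hx.1 (Ne.symm hx0)
    have ht : x + g * d < x := by nlinarith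
    have : clamp (x + g * d) ≤ x + g * d := clamp_le_of_nonneg (by
      by_contra hneg
      push_neg at hneg
      rw [clamp_of_nonpos hneg.le] at h
      linarith)
    rw [h] at this
    linarith

lemma ascent (f : ℕ → ℝ) (k0 : ℕ) (c L : ℝ) (hc : 0 < c) (hL : L < 1)
    (hub : ∀ k ≥ k0, f k ≤ L)
    (h : ∀ k ≥ k0, min 1 (f k + c) ≤ f (k + 1)) : False := by
  have key : ∀ m : ℕ, f k0 + m * c ≤ f (k0 + m) := by
    intro m
    induction m with
    | zero => simp
    | succ n ih =>
      have h1 := h (k0 + n) (Nat.le_add_right _ _)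
      have h2 := hub (k0 + n + 1) (by omega)
      have hmin : f (k0 + n) + c ≤ 1 := by
        by_contra hgt
        push_neg at hgt
        rw [min_eq_left hgt.le] at h1
        linarith
      rw [min_eq_right hmin] at h1
      have : (↑(n + 1) : ℝ) * c = n * c + c := by push_cast; ring
      rw [this]
      calc f k0 + (n * c + c) ≤ f (k0 + n) + c := by linarith
        _ ≤ f (k0 + n + 1) := h1
        _ = f (k0 + (n + 1)) := by ring_nf
  obtain ⟨m, hm⟩ := exists_nat_gt ((L - f k0) / c)
  have : (L - f k0) / c * c < m * c := by
    exact mul_lt_mul_of_pos_right hm hc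
  rw [div_mul_cancel₀ _ hc.ne'] at this
  have := key m
  have := hub (k0 + m) (Nat.le_add_right _ _)
  linarith
namespace Stmt11Aux

lemma entry_sub_le (M : Matrix (Fin 2) (Fin 2) ℝ) (i j k l : Fin 2) :
    M i j - M k l ≤ spread2 M := by
  have h1 : M i j ≤ Finset.univ.sup' Finset.univ_nonempty
      (fun p : Fin 2 × Fin 2 => M p.1 p.2) :=
    Finset.le_sup' (fun p : Fin 2 × Fin 2 => M p.1 p.2) (Finset.mem_univ (i, j))
  have h2 : Finset.univ.inf' Finset.univ_nonempty
      (fun p : Fin 2 × Fin 2 => M p.1 p.2) ≤ M k l :=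
    Finset.inf'_le (fun p : Fin 2 × Fin 2 => M p.1 p.2) (Finset.mem_univ (k, l))
  simp only [spread2]
  linarith

lemma ur2_bound (M : Matrix (Fin 2) (Fin 2) ℝ) :
    ur2 M ≤ 2 * spread2 M ∧ -(2 * spread2 M) ≤ ur2 M := by
  have h1 := entry_sub_le M 0 0 0 1
  have h2 := entry_sub_le M 1 1 1 0
  have h3 := entry_sub_le M 0 1 0 0
  have h4 := entry_sub_le M 1 0 1 1
  simp only [ur2]
  constructor <;> linarith

lemma spread2_nonneg (M : Matrix (Fin 2) (Fin 2) ℝ) : 0 ≤ spread2 M := by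
  have := entry_sub_le M 0 0 0 0
  linarith

/-- key numeric condition -/
lemma cond_sq (R C : Matrix (Fin 2) (Fin 2) ℝ) (t : ℝ) (ht : 0 ≤ t)
    (hlt : t < 1 / (spread2 R + spread2 C)) (hU : 0 < ur2 R * uc2 C) :
    t ^ 2 * (ur2 R * uc2 C) < 1 := by
  obtain ⟨hr1, hr2⟩ := ur2_bound R
  obtain ⟨hc1, hc2⟩ := ur2_bound C
  have hceq : uc2 C = ur2 C := rfl
  rw [hceq] at hU ⊢
  have hδr := spread2_nonneg R
  have hδc := spread2_nonneg C
  set δr := spread2 R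
  set δc := spread2 C
  have hS : 0 < δr + δc := by
    rcases lt_or_eq_of_le (by linarith : (0:ℝ) ≤ δr + δc) with h | h
    · exact h
    · exfalso
      have hδr0 : δr = 0 := by linarith
      have : ur2 R = 0 := by rw [hδr0] at hr1 hr2; linarith
      rw [this] at hU; simp at hU
  have htS : t * (δr + δc) < 1 := by
    rw [lt_div_iff₀ hS] at hlt; linarith
  have hbox : ur2 R * ur2 C ≤ 4 * δr * δc := by
    nlinarith [mul_nonneg (by linarith : (0:ℝ) ≤ 2*δr - ur2 R) (by linarith : (0:ℝ) ≤ 2*δc + ur2 C),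
      mul_nonneg (by linarith : (0:ℝ) ≤ 2*δr + ur2 R) (by linarith : (0:ℝ) ≤ 2*δc - ur2 C)]
  have h5 : t ^ 2 * (ur2 R * ur2 C) ≤ t ^ 2 * (4 * δr * δc) :=
    mul_le_mul_of_nonneg_left hbox (sq_nonneg t)
  have h6 : t ^ 2 * (4 * δr * δc) ≤ (t * (δr + δc)) ^ 2 := by
    nlinarith [sq_nonneg (t * (δr - δc))]
  have h7 : (t * (δr + δc)) ^ 2 < 1 := by
    nlinarith [mul_nonneg ht hS.le]
  linarith

lemma isNash_of (R C : Matrix (Fin 2) (Fin 2) ℝ) (α β : ℝ)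
    (hα : α ∈ Set.Icc (0:ℝ) 1) (hβ : β ∈ Set.Icc (0:ℝ) 1)
    (h1 : dVr2 R β ≤ 0 ∨ α = 1) (h2 : 0 ≤ dVr2 R β ∨ α = 0)
    (h3 : dVc2 C α ≤ 0 ∨ β = 1) (h4 : 0 ≤ dVc2 C α ∨ β = 0) :
    IsNash2 R C α β := by
  have hr : ∀ α' : ℝ, Vr2 R α' β - Vr2 R α β = (α' - α) * dVr2 R β := by
    intro α'; simp only [Vr2, dVr2, ur2, br2]; ring
  have hc : ∀ β' : ℝ, Vc2 C α β' - Vc2 C α β = (β' - β) * dVc2 C α := by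
    intro β'; simp only [Vc2, dVc2, uc2, bc2]; ring
  refine ⟨hα, hβ, ?_, ?_⟩
  · intro α' hα'
    rcases h1 with hd | he
    · rcases h2 with hd2 | he2
      · have hz : dVr2 R β = 0 := le_antisymm hd hd2
        have hz2 : (α' - α) * dVr2 R β = 0 := by rw [hz]; ring
        linarith [hr α']
      · subst he2
        nlinarith [hr α', mul_nonneg hα'.1 (neg_nonneg.mpr hd)]
    · subst he
      rcases h2 with hd2 | he2
      · nlinarith [hr α', mul_nonneg (by linarith [hα'.2] : (0:ℝ) ≤ 1 - α') hd2]
      · exfalso; norm_num at he2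
  · intro β' hβ'
    rcases h3 with hd | he
    · rcases h4 with hd2 | he2
      · have hz : dVc2 C α = 0 := le_antisymm hd hd2
        have hz2 : (β' - β) * dVc2 C α = 0 := by rw [hz]; ring
        linarith [hc β']
      · subst he2
        nlinarith [hc β', mul_nonneg hβ'.1 (neg_nonneg.mpr hd)]
    · subst he
      rcases h4 with hd2 | he2
      · nlinarith [hc β', mul_nonneg (by linarith [hβ'.2] : (0:ℝ) ≤ 1 - β') hd2]
      · exfalso; norm_num at he2

end Stmt11Aux
namespace Stmt11Aux

lemma quadrant_pos (ur uc AC BC η : ℝ) (γ a b abar bbar : ℕ → ℝ) (K : ℕ)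
    (hur : 0 < ur) (huc : 0 < uc)
    (hAC : AC ∈ Set.Icc (0:ℝ) 1) (hBC : BC ∈ Set.Icc (0:ℝ) 1)
    (hη : 0 < η)
    (hγpos : ∀ k, 0 < γ k)
    (hab : ∀ k, a k ∈ Set.Icc (0:ℝ) 1 ∧ b k ∈ Set.Icc (0:ℝ) 1)
    (habar : ∀ k, abar (k+1) = clamp (a k + γ k * (ur * (b k - BC))))
    (hbbar : ∀ k, bbar (k+1) = clamp (b k + γ k * (uc * (a k - AC))))
    (hA : ∀ k, a (k+1) = clamp (a k + η * (ur * (bbar (k+1) - BC))))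
    (hB : ∀ k, b (k+1) = clamp (b k + η * (uc * (abar (k+1) - AC))))
    (hK : AC ≤ a K ∧ BC ≤ b K) :
    ∃ αs βs : ℝ, αs ∈ Set.Icc (0:ℝ) 1 ∧ βs ∈ Set.Icc (0:ℝ) 1 ∧
      (ur * (βs - BC) ≤ 0 ∨ αs = 1) ∧ (0 ≤ ur * (βs - BC) ∨ αs = 0) ∧
      (uc * (αs - AC) ≤ 0 ∨ βs = 1) ∧ (0 ≤ uc * (αs - AC) ∨ βs = 0) ∧
      Tendsto a atTop (𝓝 αs) ∧ Tendsto b atTop (𝓝 βs) := by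
  -- one-step monotonicity in the ++ quadrant
  have step : ∀ k, AC ≤ a k → BC ≤ b k →
      (a k ≤ a (k+1) ∧ b k ≤ b (k+1)) ∧ (b k ≤ bbar (k+1) ∧ a k ≤ abar (k+1)) := by
    intro k hx hy
    have hbb : b k ≤ bbar (k+1) := by
      rw [hbbar k]
      calc b k = clamp (b k) := (clamp_of_mem (hab k).2).symm
        _ ≤ clamp (b k + γ k * (uc * (a k - AC))) := clamp_mono (by
            nlinarith [mul_nonneg (mul_nonneg (hγpos k).le huc.le) (sub_nonneg.mpr hx)])
    have haa : a k ≤ abar (k+1) := by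
      rw [habar k]
      calc a k = clamp (a k) := (clamp_of_mem (hab k).1).symm
        _ ≤ clamp (a k + γ k * (ur * (b k - BC))) := clamp_mono (by
            nlinarith [mul_nonneg (mul_nonneg (hγpos k).le hur.le) (sub_nonneg.mpr hy)])
    have ha1 : a k ≤ a (k+1) := by
      rw [hA k]
      calc a k = clamp (a k) := (clamp_of_mem (hab k).1).symm
        _ ≤ clamp (a k + η * (ur * (bbar (k+1) - BC))) := clamp_mono (by
            nlinarith [mul_nonneg (mul_nonneg hη.le hur.le)
              (by linarith : (0:ℝ) ≤ bbar (k+1) - BC)])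
    have hb1 : b k ≤ b (k+1) := by
      rw [hB k]
      calc b k = clamp (b k) := (clamp_of_mem (hab k).2).symm
        _ ≤ clamp (b k + η * (uc * (abar (k+1) - AC))) := clamp_mono (by
            nlinarith [mul_nonneg (mul_nonneg hη.le huc.le)
              (by linarith : (0:ℝ) ≤ abar (k+1) - AC)])
    exact ⟨⟨ha1, hb1⟩, hbb, haa⟩
  -- quadrant invariance from K on
  have hQ : ∀ m, AC ≤ a (K + m) ∧ BC ≤ b (K + m) := by
    intro m
    induction m with
    | zero => exact hK
    | succ n ih =>
      obtain ⟨⟨h1, h2⟩, _⟩ := step (K + n) ih.1 ih.2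
      exact ⟨le_trans ih.1 h1, le_trans ih.2 h2⟩
  have amono : Monotone (fun m => a (K + m)) :=
    monotone_nat_of_le_succ (fun m => ((step (K + m) (hQ m).1 (hQ m).2).1).1)
  have bmono : Monotone (fun m => b (K + m)) :=
    monotone_nat_of_le_succ (fun m => ((step (K + m) (hQ m).1 (hQ m).2).1).2)
  have abdd : BddAbove (Set.range fun m => a (K + m)) :=
    ⟨1, by rintro x ⟨m, rfl⟩; exact (hab (K + m)).1.2⟩
  have bbdd : BddAbove (Set.range fun m => b (K + m)) :=
    ⟨1, by rintro x ⟨m, rfl⟩; exact (hab (K + m)).2.2⟩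
  set αs := ⨆ m, a (K + m) with hαs
  set βs := ⨆ m, b (K + m) with hβs
  have hta : Tendsto (fun m => a (K + m)) atTop (𝓝 αs) := tendsto_atTop_ciSup amono abdd
  have htb : Tendsto (fun m => b (K + m)) atTop (𝓝 βs) := tendsto_atTop_ciSup bmono bbdd
  have hshift : ∀ f : ℕ → ℝ, (fun m => f (K + m)) = fun m => f (m + K) := by
    intro f; funext m; rw [add_comm]
  have hta' : Tendsto a atTop (𝓝 αs) := by
    rw [hshift a] at hta
    exact (tendsto_add_atTop_iff_nat K).mp hta
  have htb' : Tendsto b atTop (𝓝 βs) := by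
    rw [hshift b] at htb
    exact (tendsto_add_atTop_iff_nat K).mp htb
  have haub : ∀ m, a (K + m) ≤ αs := fun m => le_ciSup abdd m
  have hbub : ∀ m, b (K + m) ≤ βs := fun m => le_ciSup bbdd m
  have haub' : ∀ k, K ≤ k → a k ≤ αs := by
    intro k hk
    have : K + (k - K) = k := by omega
    rw [← this]; exact haub _
  have hbub' : ∀ k, K ≤ k → b k ≤ βs := by
    intro k hk
    have : K + (k - K) = k := by omega
    rw [← this]; exact hbub _
  have hαs1 : αs ≤ 1 := ciSup_le (fun m => (hab (K + m)).1.2)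
  have hβs1 : βs ≤ 1 := ciSup_le (fun m => (hab (K + m)).2.2)
  have hαs0 : AC ≤ αs := le_trans (hQ 0).1 (haub 0)
  have hβs0 : BC ≤ βs := le_trans (hQ 0).2 (hbub 0)
  refine ⟨αs, βs, ⟨le_trans hAC.1 hαs0, hαs1⟩, ⟨le_trans hBC.1 hβs0, hβs1⟩,
    ?_, Or.inl (by nlinarith), ?_, Or.inl (by nlinarith), hta', htb'⟩
  · -- ur * (βs - BC) ≤ 0 ∨ αs = 1
    by_cases hd : ur * (βs - BC) ≤ 0
    · exact Or.inl hd
    · right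
      push_neg at hd
      have hβgt : BC < βs := by nlinarith
      by_contra hne
      have hαlt : αs < 1 := lt_of_le_of_ne hαs1 hne
      have hm0 : ∃ m0, BC < b (K + m0) := by
        by_contra hall
        push_neg at hall
        have : βs ≤ BC := ciSup_le hall
        linarith
      obtain ⟨m0, hm0⟩ := hm0
      set c := η * (ur * (b (K + m0) - BC)) with hc
      have hcpos : 0 < c := by
        have := sub_pos.mpr hm0
        positivity
      refine ascent a (K + m0) c αs hcpos hαlt
        (fun k hk => haub' k (le_trans (Nat.le_add_right _ _) hk)) ?_
      intro k hk
      have hkK : K ≤ k := le_trans (Nat.le_add_right _ _) hk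
      have hbk : b (K + m0) ≤ b k := by
        have : K + (k - K) = k := by omega
        rw [← this]
        exact bmono (by omega)
      have hxk : AC ≤ a k := by
        have : K + (k - K) = k := by omega
        rw [← this]; exact (hQ _).1
      have hyk : BC ≤ b k := by
        have : K + (k - K) = k := by omega
        rw [← this]; exact (hQ _).2
      have hbb := ((step k hxk hyk).2).1
      have hstep : a k + c ≤ a k + η * (ur * (bbar (k+1) - BC)) := by
        have : b (K + m0) ≤ bbar (k+1) := le_trans hbk hbb
        nlinarith
      calc min 1 (a k + c) ≤ min 1 (a k + η * (ur * (bbar (k+1) - BC))) :=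
            min_le_min le_rfl hstep
        _ ≤ clamp (a k + η * (ur * (bbar (k+1) - BC))) := min_le_clamp _
        _ = a (k+1) := (hA k).symm
  · -- uc * (αs - AC) ≤ 0 ∨ βs = 1
    by_cases hd : uc * (αs - AC) ≤ 0
    · exact Or.inl hd
    · right
      push_neg at hd
      have hαgt : AC < αs := by nlinarith
      by_contra hne
      have hβlt : βs < 1 := lt_of_le_of_ne hβs1 hne
      have hm0 : ∃ m0, AC < a (K + m0) := by
        by_contra hall
        push_neg at hall
        have : αs ≤ AC := ciSup_le hall
        linarith
      obtain ⟨m0, hm0⟩ := hm0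
      set c := η * (uc * (a (K + m0) - AC)) with hc
      have hcpos : 0 < c := by
        have := sub_pos.mpr hm0
        positivity
      refine ascent b (K + m0) c βs hcpos hβlt
        (fun k hk => hbub' k (le_trans (Nat.le_add_right _ _) hk)) ?_
      intro k hk
      have hkK : K ≤ k := le_trans (Nat.le_add_right _ _) hk
      have hak : a (K + m0) ≤ a k := by
        have : K + (k - K) = k := by omega
        rw [← this]
        exact amono (by omega)
      have hxk : AC ≤ a k := by
        have : K + (k - K) = k := by omega
        rw [← this]; exact (hQ _).1
      have hyk : BC ≤ b k := by
        have : K + (k - K) = k := by omega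
        rw [← this]; exact (hQ _).2
      have haa := ((step k hxk hyk).2).2
      have hstep : b k + c ≤ b k + η * (uc * (abar (k+1) - AC)) := by
        have : a (K + m0) ≤ abar (k+1) := le_trans hak haa
        nlinarith
      calc min 1 (b k + c) ≤ min 1 (b k + η * (uc * (abar (k+1) - AC))) :=
            min_le_min le_rfl hstep
        _ ≤ clamp (b k + η * (uc * (abar (k+1) - AC))) := min_le_clamp _
        _ = b (k+1) := (hB k).symm

end Stmt11Aux
namespace Stmt11Aux

section Steps
variable {ur uc AC BC η γk ak bk abar1 bbar1 a1 b1 : ℝ}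
variable (hur : 0 < ur) (huc : 0 < uc) (hη : 0 < η) (hγ : 0 < γk)
variable (hAC : AC ∈ Set.Icc (0:ℝ) 1) (hBC : BC ∈ Set.Icc (0:ℝ) 1)
variable (hak : ak ∈ Set.Icc (0:ℝ) 1) (hbk : bk ∈ Set.Icc (0:ℝ) 1)
variable (habar1 : abar1 = clamp (ak + γk * (ur * (bk - BC))))
variable (hbbar1 : bbar1 = clamp (bk + γk * (uc * (ak - AC))))
variable (ha1 : a1 = clamp (ak + η * (ur * (bbar1 - BC))))
variable (hb1 : b1 = clamp (bk + η * (uc * (abar1 - AC))))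

include hur huc hη hγ hAC hBC hak hbk habar1 hbbar1 ha1 hb1

/-- From the (+,−) side one cannot jump to the (−,+) side. -/
lemma noflip1 (hη2 : η ^ 2 * (ur * uc) < 1)
    (hside : AC < ak ∧ bk < BC) : ¬(a1 < AC ∧ BC < b1) := by
  rintro ⟨h1, h2⟩
  have hg1 : (0:ℝ) ≤ γk * ur * (BC - bk) := by
    have : (0:ℝ) ≤ BC - bk := by linarith [hside.2]
    positivity
  have hg2 : (0:ℝ) ≤ γk * uc * (ak - AC) := by
    have : (0:ℝ) ≤ ak - AC := by linarith [hside.1]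
    positivity
  have habar_le : abar1 ≤ ak := by
    rw [habar1]
    calc clamp (ak + γk * (ur * (bk - BC))) ≤ clamp ak := clamp_mono (by nlinarith)
      _ = ak := clamp_of_mem hak
  have hbbar_ge : bk ≤ bbar1 := by
    rw [hbbar1]
    calc bk = clamp bk := (clamp_of_mem hbk).symm
      _ ≤ clamp (bk + γk * (uc * (ak - AC))) := clamp_mono (by nlinarith)
  have ha1lt1 : a1 < 1 := lt_of_lt_of_le h1 hAC.2
  have hta : ak + η * (ur * (bbar1 - BC)) < 1 := by
    apply lt_one_of_clamp_lt_one; rw [← ha1]; exact ha1lt1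
  have ha1ge : ak + η * (ur * (bbar1 - BC)) ≤ a1 := by
    rw [ha1]; exact le_clamp_of_le_one hta.le
  have hb1pos : 0 < b1 := lt_of_le_of_lt hBC.1 h2
  have htb : 0 < bk + η * (uc * (abar1 - AC)) := by
    apply pos_of_clamp_pos; rw [← hb1]; exact hb1pos
  have hb1le : b1 ≤ bk + η * (uc * (abar1 - AC)) := by
    rw [hb1]; exact clamp_le_of_nonneg htb.le
  set X := ak - AC with hX
  set Y := BC - bk with hY
  have hXpos : 0 < X := sub_pos.mpr hside.1
  have hYpos : 0 < Y := sub_pos.mpr hside.2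
  have key1 : X < η * ur * Y := by
    have h5 : η * (ur * (bbar1 - BC)) < -X := by linarith
    have h6 : BC - bbar1 ≤ Y := by linarith
    nlinarith [mul_le_mul_of_nonneg_left h6 (mul_nonneg hη.le hur.le)]
  have key2 : Y < η * uc * X := by
    have h5 : Y < η * (uc * (abar1 - AC)) := by linarith
    have h6 : abar1 - AC ≤ X := by linarith
    nlinarith [mul_le_mul_of_nonneg_left h6 (mul_nonneg hη.le huc.le)]
  have hch : X < η * ur * (η * uc * X) :=
    lt_of_lt_of_le key1 (mul_le_mul_of_nonneg_left key2.le (mul_nonneg hη.le hur.le))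
  nlinarith

/-- From the (−,+) side one cannot jump to the (+,−) side. -/
lemma noflip2 (hη2 : η ^ 2 * (ur * uc) < 1)
    (hside : ak < AC ∧ BC < bk) : ¬(AC < a1 ∧ b1 < BC) := by
  rintro ⟨h1, h2⟩
  have hg1 : (0:ℝ) ≤ γk * ur * (bk - BC) := by
    have : (0:ℝ) ≤ bk - BC := by linarith [hside.2]
    positivity
  have hg2 : (0:ℝ) ≤ γk * uc * (AC - ak) := by
    have : (0:ℝ) ≤ AC - ak := by linarith [hside.1]
    positivity
  have habar_ge : ak ≤ abar1 := by
    rw [habar1]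
    calc ak = clamp ak := (clamp_of_mem hak).symm
      _ ≤ clamp (ak + γk * (ur * (bk - BC))) := clamp_mono (by nlinarith)
  have hbbar_le : bbar1 ≤ bk := by
    rw [hbbar1]
    calc clamp (bk + γk * (uc * (ak - AC))) ≤ clamp bk := clamp_mono (by nlinarith)
      _ = bk := clamp_of_mem hbk
  have ha1pos : 0 < a1 := lt_of_le_of_lt hAC.1 h1
  have hta : 0 < ak + η * (ur * (bbar1 - BC)) := by
    apply pos_of_clamp_pos; rw [← ha1]; exact ha1pos
  have ha1le : a1 ≤ ak + η * (ur * (bbar1 - BC)) := by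
    rw [ha1]; exact clamp_le_of_nonneg hta.le
  have hb1lt1 : b1 < 1 := lt_of_lt_of_le h2 hBC.2
  have htb : bk + η * (uc * (abar1 - AC)) < 1 := by
    apply lt_one_of_clamp_lt_one; rw [← hb1]; exact hb1lt1
  have hb1ge : bk + η * (uc * (abar1 - AC)) ≤ b1 := by
    rw [hb1]; exact le_clamp_of_le_one htb.le
  set X := AC - ak with hX
  set Y := bk - BC with hY
  have hXpos : 0 < X := sub_pos.mpr hside.1
  have hYpos : 0 < Y := sub_pos.mpr hside.2
  have key1 : X < η * ur * Y := by
    have h5 : X < η * (ur * (bbar1 - BC)) := by linarith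
    have h6 : bbar1 - BC ≤ Y := by linarith
    nlinarith [mul_le_mul_of_nonneg_left h6 (mul_nonneg hη.le hur.le)]
  have key2 : Y < η * uc * X := by
    have h5 : η * (uc * (abar1 - AC)) < -Y := by linarith
    have h6 : AC - abar1 ≤ X := by linarith
    nlinarith [mul_le_mul_of_nonneg_left h6 (mul_nonneg hη.le huc.le)]
  have hch : X < η * ur * (η * uc * X) :=
    lt_of_lt_of_le key1 (mul_le_mul_of_nonneg_left key2.le (mul_nonneg hη.le hur.le))
  nlinarith

/-- Contraction of the stable coordinate on the (+,−) side. -/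
lemma contract1 {p q : ℝ} (hp : 0 < p) (hq : 0 < q) (hp2 : p * p = ur) (hq2 : q * q = uc)
    (hside : AC < ak ∧ bk < BC) (hside1 : AC < a1 ∧ b1 < BC) :
    q * (a1 - AC) + p * (BC - b1) ≤
      (1 - η * (p * q) * (1 - γk * (p * q))) * (q * (ak - AC) + p * (BC - bk)) := by
  have hg2 : (0:ℝ) ≤ γk * (uc * (ak - AC)) := by
    have : (0:ℝ) ≤ ak - AC := by linarith [hside.1]
    positivity
  have hg1 : (0:ℝ) ≤ γk * (ur * (BC - bk)) := by
    have : (0:ℝ) ≤ BC - bk := by linarith [hside.2]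
    positivity
  have E1 : bbar1 - BC ≤ bk + γk * (uc * (ak - AC)) - BC := by
    have ht : (0:ℝ) ≤ bk + γk * (uc * (ak - AC)) := by linarith [hbk.1]
    rw [hbbar1]
    linarith [clamp_le_of_nonneg ht]
  have E2 : ak + γk * (ur * (bk - BC)) - AC ≤ abar1 - AC := by
    have ht : ak + γk * (ur * (bk - BC)) ≤ 1 := by nlinarith [hak.2]
    rw [habar1]
    linarith [le_clamp_of_le_one ht]
  have E3 : a1 - AC ≤ (ak - AC) + η * (ur * (bbar1 - BC)) := by
    have hpos : 0 < ak + η * (ur * (bbar1 - BC)) := by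
      apply pos_of_clamp_pos
      rw [← ha1]; exact lt_of_le_of_lt hAC.1 hside1.1
    rw [ha1]
    linarith [clamp_le_of_nonneg hpos.le]
  have E4 : BC - b1 ≤ (BC - bk) - η * (uc * (abar1 - AC)) := by
    have hlt : bk + η * (uc * (abar1 - AC)) < 1 := by
      apply lt_one_of_clamp_lt_one
      rw [← hb1]; exact lt_of_lt_of_le hside1.2 hBC.2
    rw [hb1]
    linarith [le_clamp_of_le_one hlt.le]
  have hqur : (0:ℝ) ≤ η * (q * ur) := by positivity
  have hpuc : (0:ℝ) ≤ η * (p * uc) := by positivity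
  have M1 := mul_le_mul_of_nonneg_left E1 hqur
  have M2 := mul_le_mul_of_nonneg_left E2 hpuc
  have M3 := mul_le_mul_of_nonneg_left E3 hq.le
  have M4 := mul_le_mul_of_nonneg_left E4 hp.le
  simp only [← hp2, ← hq2] at M1 M2 M3 M4
  nlinarith [M1, M2, M3, M4]

/-- Contraction of the stable coordinate on the (−,+) side. -/
lemma contract2 {p q : ℝ} (hp : 0 < p) (hq : 0 < q) (hp2 : p * p = ur) (hq2 : q * q = uc)
    (hside : ak < AC ∧ BC < bk) (hside1 : a1 < AC ∧ BC < b1) :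
    q * (AC - a1) + p * (b1 - BC) ≤
      (1 - η * (p * q) * (1 - γk * (p * q))) * (q * (AC - ak) + p * (bk - BC)) := by
  have hg2 : (0:ℝ) ≤ γk * (uc * (AC - ak)) := by
    have : (0:ℝ) ≤ AC - ak := by linarith [hside.1]
    positivity
  have hg1 : (0:ℝ) ≤ γk * (ur * (bk - BC)) := by
    have : (0:ℝ) ≤ bk - BC := by linarith [hside.2]
    positivity
  have E1 : bk + γk * (uc * (ak - AC)) - BC ≤ bbar1 - BC := by
    have ht : bk + γk * (uc * (ak - AC)) ≤ 1 := by nlinarith [hbk.2]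
    rw [hbbar1]
    linarith [le_clamp_of_le_one ht]
  have E2 : abar1 - AC ≤ ak + γk * (ur * (bk - BC)) - AC := by
    have ht : (0:ℝ) ≤ ak + γk * (ur * (bk - BC)) := by linarith [hak.1]
    rw [habar1]
    linarith [clamp_le_of_nonneg ht]
  have E3 : (ak - AC) + η * (ur * (bbar1 - BC)) ≤ a1 - AC := by
    have hlt : ak + η * (ur * (bbar1 - BC)) < 1 := by
      apply lt_one_of_clamp_lt_one
      rw [← ha1]; exact lt_of_lt_of_le hside1.1 hAC.2
    rw [ha1]
    linarith [le_clamp_of_le_one hlt.le]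
  have E4 : b1 - BC ≤ (bk - BC) + η * (uc * (abar1 - AC)) := by
    have hpos : 0 < bk + η * (uc * (abar1 - AC)) := by
      apply pos_of_clamp_pos
      rw [← hb1]; exact lt_of_le_of_lt hBC.1 hside1.2
    rw [hb1]
    linarith [clamp_le_of_nonneg hpos.le]
  have hqur : (0:ℝ) ≤ η * (q * ur) := by positivity
  have hpuc : (0:ℝ) ≤ η * (p * uc) := by positivity
  have M1 := mul_le_mul_of_nonneg_left E1 hqur
  have M2 := mul_le_mul_of_nonneg_left E2 hpuc
  have M3 := mul_le_mul_of_nonneg_left E3 hq.le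
  have M4 := mul_le_mul_of_nonneg_left E4 hp.le
  simp only [← hp2, ← hq2] at M1 M2 M3 M4
  nlinarith [M1, M2, M3, M4]

end Steps
end Stmt11Aux
namespace Stmt11Aux

lemma clamp_one_sub (x : ℝ) : clamp (1 - x) = 1 - clamp x := by
  rcases le_total x 0 with h | h
  · rw [clamp_of_nonpos h, clamp_of_one_le (by linarith)]; ring
  · rcases le_total 1 x with h1 | h1
    · rw [clamp_of_one_le h1, clamp_of_nonpos (by linarith)]; ring
    · rw [clamp_of_mem ⟨h, h1⟩, clamp_of_mem ⟨by linarith, by linarith⟩]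

lemma one_sub_mem {x : ℝ} (h : x ∈ Set.Icc (0:ℝ) 1) : 1 - x ∈ Set.Icc (0:ℝ) 1 :=
  ⟨by linarith [h.2], by linarith [h.1]⟩

lemma abstract_main (ur uc AC BC η γ₀ : ℝ) (γ a b abar bbar : ℕ → ℝ)
    (hur : 0 < ur) (huc : 0 < uc)
    (hAC : AC ∈ Set.Icc (0:ℝ) 1) (hBC : BC ∈ Set.Icc (0:ℝ) 1)
    (hη : 0 < η) (hη2 : η ^ 2 * (ur * uc) < 1)
    (hγ₀pos : 0 < γ₀) (hγ₀2 : γ₀ ^ 2 * (ur * uc) < 1)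
    (hγ0 : γ 0 = γ₀)
    (hγstep : ∀ k, γ (k+1) = γ k ∨ ∃ μ : ℝ, 0 < μ ∧ μ < 1 ∧ γ (k+1) = μ * γ k)
    (ha0 : a 0 ∈ Set.Icc (0:ℝ) 1) (hb0 : b 0 ∈ Set.Icc (0:ℝ) 1)
    (habar : ∀ k, abar (k+1) = clamp (a k + γ k * (ur * (b k - BC))))
    (hbbar : ∀ k, bbar (k+1) = clamp (b k + γ k * (uc * (a k - AC))))
    (hterm : ∀ k, (abar (k+1) = a k ∧ bbar (k+1) = b k) →
        a (k+1) = a k ∧ b (k+1) = b k ∧ γ (k+1) = γ k)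
    (hstep : ∀ k, ¬(abar (k+1) = a k ∧ bbar (k+1) = b k) →
        a (k+1) = clamp (a k + η * (ur * (bbar (k+1) - BC))) ∧
        b (k+1) = clamp (b k + η * (uc * (abar (k+1) - AC)))) :
    ∃ αs βs : ℝ, αs ∈ Set.Icc (0:ℝ) 1 ∧ βs ∈ Set.Icc (0:ℝ) 1 ∧
      (ur * (βs - BC) ≤ 0 ∨ αs = 1) ∧ (0 ≤ ur * (βs - BC) ∨ αs = 0) ∧
      (uc * (αs - AC) ≤ 0 ∨ βs = 1) ∧ (0 ≤ uc * (αs - AC) ∨ βs = 0) ∧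
      Tendsto a atTop (𝓝 αs) ∧ Tendsto b atTop (𝓝 βs) := by
  -- γ is positive and bounded by γ₀
  have hγpos : ∀ k, 0 < γ k := by
    intro k
    induction k with
    | zero => rw [hγ0]; exact hγ₀pos
    | succ n ih =>
      rcases hγstep n with h | ⟨μ, hμ0, _, hμe⟩
      · rw [h]; exact ih
      · rw [hμe]; exact mul_pos hμ0 ih
  have hγle : ∀ k, γ k ≤ γ₀ := by
    intro k
    induction k with
    | zero => rw [hγ0]
    | succ n ih =>
      rcases hγstep n with h | ⟨μ, hμ0, hμ1, hμe⟩
      · rw [h]; exact ih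
      · rw [hμe]
        nlinarith [hγpos n]
  -- strategies stay in [0,1]
  have hab : ∀ k, a k ∈ Set.Icc (0:ℝ) 1 ∧ b k ∈ Set.Icc (0:ℝ) 1 := by
    intro k
    induction k with
    | zero => exact ⟨ha0, hb0⟩
    | succ n ih =>
      by_cases hTn : abar (n+1) = a n ∧ bbar (n+1) = b n
      · obtain ⟨e1, e2, _⟩ := hterm n hTn
        rw [e1, e2]; exact ih
      · obtain ⟨e1, e2⟩ := hstep n hTn
        rw [e1, e2]; exact ⟨clamp_mem _, clamp_mem _⟩
  by_cases hT : ∃ K, abar (K+1) = a K ∧ bbar (K+1) = b K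
  · -- termination: the state is eventually constant
    obtain ⟨K, hTK⟩ := hT
    have hconst : ∀ m, a (K+m) = a K ∧ b (K+m) = b K ∧ γ (K+m) = γ K ∧
        abar (K+m+1) = a K ∧ bbar (K+m+1) = b K := by
      intro m
      induction m with
      | zero => exact ⟨rfl, rfl, rfl, hTK.1, hTK.2⟩
      | succ n ih =>
        obtain ⟨i1, i2, i3, i4, i5⟩ := ih
        have hTn : abar (K+n+1) = a (K+n) ∧ bbar (K+n+1) = b (K+n) := by
          rw [i1, i2]; exact ⟨i4, i5⟩
        obtain ⟨e1, e2, e3⟩ := hterm (K+n) hTn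
        have q1 : a (K+n+1) = a K := by rw [e1, i1]
        have q2 : b (K+n+1) = b K := by rw [e2, i2]
        have q3 : γ (K+n+1) = γ K := by rw [e3, i3]
        refine ⟨q1, q2, q3, ?_, ?_⟩
        · show abar (K+n+1+1) = a K
          rw [habar (K+n+1), q1, q2, q3, ← habar K]
          exact hTK.1
        · show bbar (K+n+1+1) = b K
          rw [hbbar (K+n+1), q1, q2, q3, ← hbbar K]
          exact hTK.2
    have hconst' : ∀ k, K ≤ k → a k = a K ∧ b k = b K := by
      intro k hk
      have : K + (k - K) = k := by omega
      rw [← this]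
      exact ⟨(hconst _).1, (hconst _).2.1⟩
    have hfix1 := clamp_fix (hab K).1 (hγpos K) (by rw [← habar K]; exact hTK.1)
    have hfix2 := clamp_fix (hab K).2 (hγpos K) (by rw [← hbbar K]; exact hTK.2)
    refine ⟨a K, b K, (hab K).1, (hab K).2, hfix1.1, hfix1.2, hfix2.1, hfix2.2, ?_, ?_⟩
    · exact tendsto_atTop_of_eventually_const (fun k hk => (hconst' k hk).1)
    · exact tendsto_atTop_of_eventually_const (fun k hk => (hconst' k hk).2)
  · -- no termination: the gradient-step recursion holds at every step
    push_neg at hT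
    have hA : ∀ k, a (k+1) = clamp (a k + η * (ur * (bbar (k+1) - BC))) :=
      fun k => (hstep k (by
        intro h
        exact absurd h.2 (hT k h.1))).1
    have hB : ∀ k, b (k+1) = clamp (b k + η * (uc * (abar (k+1) - AC))) :=
      fun k => (hstep k (by
        intro h
        exact absurd h.2 (hT k h.1))).2
    by_cases hQ : ∃ K, (AC ≤ a K ∧ BC ≤ b K) ∨ (a K ≤ AC ∧ b K ≤ BC)
    · obtain ⟨K, hK⟩ := hQ
      rcases hK with hK | hK
      · -- (+,+) trapping quadrant
        obtain ⟨αs, βs, h1, h2, h3, h4, h5, h6, h7, h8⟩ :=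
          quadrant_pos ur uc AC BC η γ a b abar bbar K hur huc hAC hBC hη hγpos hab
            habar hbbar hA hB hK
        exact ⟨αs, βs, h1, h2, h3, h4, h5, h6, h7, h8⟩
      · -- (−,−) trapping quadrant: apply the previous case to the reflected system
        have hK' : (1 - AC) ≤ 1 - a K ∧ (1 - BC) ≤ 1 - b K := ⟨by linarith [hK.1], by linarith [hK.2]⟩
        obtain ⟨As, Bs, h1, h2, h3, h4, h5, h6, h7, h8⟩ :=
          quadrant_pos ur uc (1 - AC) (1 - BC) η γ (fun k => 1 - a k) (fun k => 1 - b k)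
            (fun k => 1 - abar k) (fun k => 1 - bbar k) K hur huc (one_sub_mem hAC)
            (one_sub_mem hBC) hη hγpos
            (fun k => ⟨one_sub_mem (hab k).1, one_sub_mem (hab k).2⟩)
            (fun k => by
              show 1 - abar (k+1) = _
              rw [habar k, ← clamp_one_sub]
              ring_nf)
            (fun k => by
              show 1 - bbar (k+1) = _
              rw [hbbar k, ← clamp_one_sub]
              ring_nf)
            (fun k => by
              show 1 - a (k+1) = _
              rw [hA k, ← clamp_one_sub]
              ring_nf)
            (fun k => by
              show 1 - b (k+1) = _
              rw [hB k, ← clamp_one_sub]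
              ring_nf)
            hK'
        refine ⟨1 - As, 1 - Bs, one_sub_mem h1, one_sub_mem h2, ?_, ?_, ?_, ?_, ?_, ?_⟩
        · rcases h4 with h | h
          · left; nlinarith
          · right; linarith
        · rcases h3 with h | h
          · left; nlinarith
          · right; linarith
        · rcases h6 with h | h
          · left; nlinarith
          · right; linarith
        · rcases h5 with h | h
          · left; nlinarith
          · right; linarith
        · have h9 := (tendsto_const_nhds : Tendsto (fun _ : ℕ => (1:ℝ)) atTop (𝓝 1)).sub h7
          simpa using h9
        · have h9 := (tendsto_const_nhds : Tendsto (fun _ : ℕ => (1:ℝ)) atTop (𝓝 1)).sub h8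
          simpa using h9
    · -- forever strictly mixed: contraction to the center
      push_neg at hQ
      have hMix : ∀ k, (AC < a k ∧ b k < BC) ∨ (a k < AC ∧ BC < b k) := by
        intro k
        rcases lt_trichotomy (a k) AC with h1 | h1 | h1
        · exact Or.inr ⟨h1, (hQ k).2 h1.le⟩
        · exact absurd ((hQ k).2 h1.le) (not_lt.mpr ((hQ k).1 h1.ge).le)
        · exact Or.inl ⟨h1, (hQ k).1 h1.le⟩
      set p := Real.sqrt ur with hpdef
      set q := Real.sqrt uc with hqdef
      have hp : 0 < p := Real.sqrt_pos.mpr hur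
      have hq : 0 < q := Real.sqrt_pos.mpr huc
      have hp2 : p * p = ur := Real.mul_self_sqrt hur.le
      have hq2 : q * q = uc := Real.mul_self_sqrt huc.le
      have hpq : 0 < p * q := mul_pos hp hq
      have hηpq : η * (p * q) < 1 := by
        have hsq : (η * (p * q)) ^ 2 < 1 := by
          have : (η * (p * q)) ^ 2 = η ^ 2 * (ur * uc) := by
            rw [← hp2, ← hq2]; ring
          rw [this]; exact hη2
        nlinarith [mul_pos hη hpq]
      have hγpq : γ₀ * (p * q) < 1 := by
        have hsq : (γ₀ * (p * q)) ^ 2 < 1 := by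
          have : (γ₀ * (p * q)) ^ 2 = γ₀ ^ 2 * (ur * uc) := by
            rw [← hp2, ← hq2]; ring
          rw [this]; exact hγ₀2
        nlinarith [mul_pos hγ₀pos hpq]
      set lam := 1 - η * (p * q) * (1 - γ₀ * (p * q)) with hlam
      have hlam0 : 0 ≤ lam := by nlinarith [mul_pos hη hpq]
      have hlam1 : lam < 1 := by nlinarith [mul_pos hη hpq]
      set s : ℕ → ℝ := fun k => q * |a k - AC| + p * |b k - BC| with hs
      have hs_nonneg : ∀ k, 0 ≤ s k := fun k => by positivity
      have hs1 : ∀ k, AC < a k ∧ b k < BC → s k = q * (a k - AC) + p * (BC - b k) := by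
        intro k hk
        simp only [hs]
        rw [abs_of_pos (sub_pos.mpr hk.1), abs_of_neg (sub_neg.mpr hk.2), neg_sub]
      have hs2 : ∀ k, a k < AC ∧ BC < b k → s k = q * (AC - a k) + p * (b k - BC) := by
        intro k hk
        simp only [hs]
        rw [abs_of_neg (sub_neg.mpr hk.1), abs_of_pos (sub_pos.mpr hk.2), neg_sub]
      have hlamk : ∀ k, (1 - η * (p * q) * (1 - γ k * (p * q))) * s k ≤ lam * s k := by
        intro k
        apply mul_le_mul_of_nonneg_right _ (hs_nonneg k)
        have h1 := hγle k
        rw [hlam]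
        nlinarith [mul_le_mul_of_nonneg_left h1
          (mul_nonneg (mul_nonneg hη.le hpq.le) hpq.le)]
      have hcontr : ∀ k, s (k+1) ≤ lam * s k := by
        intro k
        rcases hMix k with hk | hk
        · rcases hMix (k+1) with hk1 | hk1
          · rw [hs1 k hk, hs1 (k+1) hk1]
            refine le_trans (contract1 hur huc hη (hγpos k) hAC hBC (hab k).1 (hab k).2
              (habar k) (hbbar k) (hA k) (hB k) hp hq hp2 hq2 hk hk1) ?_
            rw [← hs1 k hk]
            exact hlamk k
          · exact absurd hk1 (noflip1 hur huc hη (hγpos k) hAC hBC (hab k).1 (hab k).2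
              (habar k) (hbbar k) (hA k) (hB k) hη2 hk)
        · rcases hMix (k+1) with hk1 | hk1
          · exact absurd hk1 (noflip2 hur huc hη (hγpos k) hAC hBC (hab k).1 (hab k).2
              (habar k) (hbbar k) (hA k) (hB k) hη2 hk)
          · rw [hs2 k hk, hs2 (k+1) hk1]
            refine le_trans (contract2 hur huc hη (hγpos k) hAC hBC (hab k).1 (hab k).2
              (habar k) (hbbar k) (hA k) (hB k) hp hq hp2 hq2 hk hk1) ?_
            rw [← hs2 k hk]
            exact hlamk k
      have hgeom : ∀ k, s k ≤ lam ^ k * s 0 := by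
        intro k
        induction k with
        | zero => simp
        | succ n ih =>
          calc s (n+1) ≤ lam * s n := hcontr n
            _ ≤ lam * (lam ^ n * s 0) := mul_le_mul_of_nonneg_left ih hlam0
            _ = lam ^ (n+1) * s 0 := by ring
      have hpow : Tendsto (fun k => lam ^ k * s 0) atTop (𝓝 0) := by
        have := (tendsto_pow_atTop_nhds_zero_of_lt_one hlam0 hlam1).mul_const (s 0)
        simpa using this
      have hta : Tendsto a atTop (𝓝 AC) := by
        rw [tendsto_iff_dist_tendsto_zero]
        apply squeeze_zero (fun k => dist_nonneg)
          (g := fun k => (lam ^ k * s 0) / q)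
        · intro k
          rw [Real.dist_eq, le_div_iff₀ hq]
          calc |a k - AC| * q = q * |a k - AC| := by ring
            _ ≤ s k := by
                have : 0 ≤ p * |b k - BC| := by positivity
                simp only [hs]; linarith
            _ ≤ lam ^ k * s 0 := hgeom k
        · simpa using hpow.div_const q
      have htb : Tendsto b atTop (𝓝 BC) := by
        rw [tendsto_iff_dist_tendsto_zero]
        apply squeeze_zero (fun k => dist_nonneg)
          (g := fun k => (lam ^ k * s 0) / p)
        · intro k
          rw [Real.dist_eq, le_div_iff₀ hp]
          calc |b k - BC| * p = p * |b k - BC| := by ring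
            _ ≤ s k := by
                have : 0 ≤ q * |a k - AC| := by positivity
                simp only [hs]; linarith
            _ ≤ lam ^ k * s 0 := hgeom k
        · simpa using hpow.div_const p
      exact ⟨AC, BC, hAC, hBC, Or.inl (by simp), Or.inl (by simp), Or.inl (by simp),
        Or.inl (by simp), hta, htb⟩

end Stmt11Aux
/-- Property 1: in a 2×2 game with u_r u_c > 0 whose center
(α^c, β^c) = (−b_c/u_c, −b_r/u_r) has both coordinates in [0,1], if both
agents follow GA-SPP (Conditions 1–3), then from any initial strategy pair
the strategies converge to a Nash equilibrium. -/
theorem stmt11 (R C : Matrix (Fin 2) (Fin 2) ℝ)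
    (hU : 0 < ur2 R * uc2 C)
    (hαc : -bc2 C / uc2 C ∈ Set.Icc (0 : ℝ) 1)
    (hβc : -br2 R / ur2 R ∈ Set.Icc (0 : ℝ) 1)
    (γ₀ η : ℝ) (hcond : Conds2 R C γ₀ η)
    (γ a b abar bbar : ℕ → ℝ)
    (hγ₀ : γ 0 = γ₀) (ha₀ : a 0 ∈ Set.Icc (0 : ℝ) 1) (hb₀ : b 0 ∈ Set.Icc (0 : ℝ) 1)
    (hrun : GASPP2Run R C η γ a b abar bbar) :
    ∃ αs βs : ℝ, IsNash2 R C αs βs ∧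
      Filter.Tendsto (fun k => (a k, b k)) Filter.atTop (nhds (αs, βs)) := by
  classical
  obtain ⟨hγ₀pos, hηpos, _hc2, hηlt, hγlt⟩ := hcond
  have hη2 : η ^ 2 * (ur2 R * uc2 C) < 1 := Stmt11Aux.cond_sq R C η hηpos.le hηlt hU
  have hγ2 : γ₀ ^ 2 * (ur2 R * uc2 C) < 1 := Stmt11Aux.cond_sq R C γ₀ hγ₀pos.le hγlt hU
  have hγstep : ∀ k, γ (k+1) = γ k ∨ ∃ μ : ℝ, 0 < μ ∧ μ < 1 ∧ γ (k+1) = μ * γ k := by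
    intro k
    obtain ⟨e1, e2, ht, hs⟩ := hrun k
    by_cases hT : abar (k+1) = a k ∧ bbar (k+1) = b k
    · exact Or.inl (ht hT).2.2
    · obtain ⟨f1, f2, f3, f4⟩ := hs hT
      by_cases hC : a (k+1) = a k ∧ b (k+1) = b k
      · exact Or.inr (f3 hC)
      · exact Or.inl (f4 hC)
  have hurne : ur2 R ≠ 0 := by
    intro h
    rw [h, zero_mul] at hU
    exact lt_irrefl _ hU
  rcases lt_or_gt_of_ne hurne with hneg | hpos
  · -- ur < 0, uc < 0 : reflect the column player
    have hucneg : uc2 C < 0 := by nlinarith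
    set ur' := -ur2 R with hur'
    set uc' := -uc2 C with huc'
    set AC' := -bc2 C / uc2 C with hAC'
    set BC' := 1 - -br2 R / ur2 R with hBC'
    have hurpos' : 0 < ur' := by rw [hur']; linarith
    have hucpos' : 0 < uc' := by rw [huc']; linarith
    have hdr'' : ∀ β : ℝ, dVr2 R β = ur' * ((1 - β) - BC') := by
      intro β
      simp only [dVr2, hur', hBC']
      field_simp
      ring
    have hdc2 : ∀ α : ℝ, -dVc2 C α = uc' * (α - AC') := by
      intro α
      simp only [dVc2, huc', hAC']
      field_simp [hucneg.ne]
      ring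
    have hprod : ur' * uc' = ur2 R * uc2 C := by rw [hur', huc']; ring
    obtain ⟨αs, Bs, m1, m2, c1, c2, c3, c4, t1, t2⟩ :=
      Stmt11Aux.abstract_main ur' uc' AC' BC' η γ₀ γ a (fun k => 1 - b k) abar
        (fun k => 1 - bbar k) hurpos' hucpos' hαc (Stmt11Aux.one_sub_mem hβc) hηpos
        (by rw [hprod]; exact hη2) hγ₀pos (by rw [hprod]; exact hγ2) hγ₀ hγstep ha₀
        (Stmt11Aux.one_sub_mem hb₀)
        (fun k => by rw [(hrun k).1, hdr''])
        (fun k => by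
          show 1 - bbar (k+1) = clamp ((1 - b k) + γ k * (uc' * (a k - AC')))
          rw [(hrun k).2.1, ← Stmt11Aux.clamp_one_sub]
          congr 1
          rw [← hdc2 (a k)]
          ring)
        (fun k => by
          rintro ⟨h1, h2⟩
          have h2' : bbar (k+1) = b k := by
            have : 1 - bbar (k+1) = 1 - b k := h2
            linarith
          obtain ⟨e1, e2, e3⟩ := (hrun k).2.2.1 ⟨h1, h2'⟩
          refine ⟨e1, ?_, e3⟩
          show 1 - b (k+1) = 1 - b k
          rw [e2])
        (fun k hne => by
          have hne' : ¬(abar (k+1) = a k ∧ bbar (k+1) = b k) := by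
            rintro ⟨h1, h2⟩
            refine hne ⟨h1, ?_⟩
            show 1 - bbar (k+1) = 1 - b k
            rw [h2]
          obtain ⟨f1, f2, _, _⟩ := (hrun k).2.2.2 hne'
          constructor
          · rw [f1, hdr'']
          · show 1 - b (k+1) = clamp ((1 - b k) + η * (uc' * (abar (k+1) - AC')))
            rw [f2, ← Stmt11Aux.clamp_one_sub]
            congr 1
            rw [← hdc2 (abar (k+1))]
            ring)
    have e : dVr2 R (1 - Bs) = ur' * (Bs - BC') := by
      rw [hdr'' (1 - Bs)]
      ring_nf
    have e2 : uc' * (αs - AC') = -dVc2 C αs := (hdc2 αs).symm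
    refine ⟨αs, 1 - Bs, Stmt11Aux.isNash_of R C αs (1 - Bs) m1 (Stmt11Aux.one_sub_mem m2)
      ?_ ?_ ?_ ?_, ?_⟩
    · rcases c1 with h | h
      · left; rw [e]; exact h
      · right; exact h
    · rcases c2 with h | h
      · left; rw [e]; exact h
      · right; exact h
    · rcases c4 with h | h
      · left; rw [e2] at h; linarith
      · right; rw [h]; norm_num
    · rcases c3 with h | h
      · left; rw [e2] at h; linarith
      · right; rw [h]; norm_num
    · have tb : Filter.Tendsto b Filter.atTop (nhds (1 - Bs)) := by
        have h9 := (tendsto_const_nhds : Filter.Tendsto (fun _ : ℕ => (1:ℝ))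
          Filter.atTop (nhds 1)).sub t2
        simpa using h9
      exact t1.prodMk_nhds tb
  · -- ur > 0, uc > 0
    have hucpos : 0 < uc2 C := by nlinarith
    set AC := -bc2 C / uc2 C with hACd
    set BC := -br2 R / ur2 R with hBCd
    have hdr : ∀ β : ℝ, dVr2 R β = ur2 R * (β - BC) := by
      intro β
      simp only [dVr2, hBCd]
      field_simp
      ring
    have hdc : ∀ α : ℝ, dVc2 C α = uc2 C * (α - AC) := by
      intro α
      simp only [dVc2, hACd]
      field_simp
      ring
    obtain ⟨αs, βs, m1, m2, c1, c2, c3, c4, t1, t2⟩ :=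
      Stmt11Aux.abstract_main (ur2 R) (uc2 C) AC BC η γ₀ γ a b abar bbar hpos hucpos
        hαc hβc hηpos hη2 hγ₀pos hγ2 hγ₀ hγstep ha₀ hb₀
        (fun k => by rw [(hrun k).1, hdr])
        (fun k => by rw [(hrun k).2.1, hdc])
        (fun k h => (hrun k).2.2.1 h)
        (fun k h => ⟨by rw [((hrun k).2.2.2 h).1, hdr], by rw [((hrun k).2.2.2 h).2.1, hdc]⟩)
    refine ⟨αs, βs, Stmt11Aux.isNash_of R C αs βs m1 m2 ?_ ?_ ?_ ?_, t1.prodMk_nhds t2⟩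
    · rw [hdr]; exact c1
    · rw [hdr]; exact c2
    · rw [hdc]; exact c3
    · rw [hdc]; exact c4
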